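/- Let L ∈ 𝐋^reg and M ∈ 𝐋 satisfy d_ABW(L,M)² < min_{t=1,…,T} λ_min((LᵀL)_{t,t}), where λ_min(A) denotes the smallest eigenvalue of the symmetric matrix A. Then the set of optimizers 𝐎*(L,M) is a singleton; in particular, there exists a unique geodesic between [L] and [M] in (𝐋/𝐎, d_ABW). -/

import Mathlib

open Matrix Filter Topology

/-- Square matrices of size `dT × dT`, indexed by blocks: index `(t, i)` is
row/column `i` within block `t`. -/
abbrev Mat (d T : ℕ) := Matrix (Fin T × Fin d) (Fin T × Fin d) ℝ

/-- The `t`-th diagonal `d × d` block of a `dT × dT` matrix. -/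
def blk {d T : ℕ} (A : Mat d T) (t : Fin T) : Matrix (Fin d) (Fin d) ℝ :=
  fun i j => A (t, i) (t, j)

/-- The `t`-th block column of a `dT × dT` matrix, a `dT × d` matrix. -/
def colBlk {d T : ℕ} (A : Mat d T) (t : Fin T) : Matrix (Fin T × Fin d) (Fin d) ℝ :=
  fun p j => A p (t, j)

/-- Membership in `𝐋`: block lower triangular matrices. -/
def memL {d T : ℕ} (A : Mat d T) : Prop :=
  ∀ (t s : Fin T) (i j : Fin d), t < s → A (t, i) (s, j) = 0

/-- Membership in `𝐎`: block diagonal matrices with orthogonal `d × d` diagonal blocks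
(equivalently: block diagonal and orthogonal). -/
def memO {d T : ℕ} (O : Mat d T) : Prop :=
  (∀ (t s : Fin T) (i j : Fin d), t ≠ s → O (t, i) (s, j) = 0) ∧ Oᵀ * O = 1

/-- The Frobenius norm of a real matrix. -/
noncomputable def frobNorm {m n : Type*} [Fintype m] [Fintype n] (A : Matrix m n ℝ) : ℝ :=
  Real.sqrt (∑ i, ∑ j, (A i j) ^ 2)

/-- The Frobenius inner product of two real matrices. -/
noncomputable def frobInner {m n : Type*} [Fintype m] [Fintype n] (A B : Matrix m n ℝ) : ℝ :=
  ∑ i, ∑ j, A i j * B i j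

/-- The adapted Bures–Wasserstein distance `d_ABW(L, M) = inf_{O ∈ 𝐎} ‖L - M O‖_F`. -/
noncomputable def dABW {d T : ℕ} (L M : Mat d T) : ℝ :=
  sInf {r : ℝ | ∃ O : Mat d T, memO O ∧ r = frobNorm (L - M * O)}

/-- The set `𝐎*(L, M)` of optimizers of `inf_{O ∈ 𝐎} ‖L - M O‖_F`. -/
noncomputable def OStar {d T : ℕ} (L M : Mat d T) : Set (Mat d T) :=
  {O | memO O ∧ frobNorm (L - M * O) = dABW L M}

/-- The set `𝐕(L) = {M P - L : M ∈ 𝐋, P ∈ 𝐎*(L, M)}`. -/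
noncomputable def VSet {d T : ℕ} (L : Mat d T) : Set (Mat d T) :=
  {V | ∃ M P : Mat d T, memL M ∧ P ∈ OStar L M ∧ V = M * P - L}

/-- The set `𝒱(L) = {V ∈ 𝐋 : (Vᵀ L)_{t,t} is symmetric for all t}`. -/
def calV {d T : ℕ} (L : Mat d T) : Set (Mat d T) :=
  {V | memL V ∧ ∀ t : Fin T, (blk (Vᵀ * L) t).IsSymm}

/-- The set `𝐋^reg = {L ∈ 𝐋 : (Lᵀ L)_{t,t} is positive definite for all t}`. -/
def LReg {d T : ℕ} : Set (Mat d T) :=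
  {L | memL L ∧ ∀ t : Fin T, (blk (Lᵀ * L) t).PosDef}

/-- The sum of the singular values of a real square matrix `A`,
i.e. the trace of the positive semidefinite square root of `Aᵀ A`. -/
noncomputable def svSum {n : ℕ} (A : Matrix (Fin n) (Fin n) ℝ) : ℝ :=
  (((Matrix.posSemidef_conjTranspose_mul_self A).1.eigenvectorUnitary : Matrix (Fin n) (Fin n) ℝ) *
    diagonal ((RCLike.ofReal : ℝ → ℝ) ∘ Real.sqrt ∘ (Matrix.posSemidef_conjTranspose_mul_self A).1.eigenvalues) *
    (star (Matrix.posSemidef_conjTranspose_mul_self A).1.eigenvectorUnitary :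
      Matrix (Fin n) (Fin n) ℝ)).trace

/-- The operator norm of a real matrix: the supremum of the euclidean norm `‖A x‖₂`
over the euclidean unit ball. -/
noncomputable def opNorm {m n : Type*} [Fintype m] [Fintype n] (A : Matrix m n ℝ) : ℝ :=
  sSup {r : ℝ | ∃ x : n → ℝ, (∑ j, (x j) ^ 2) ≤ 1 ∧ r = Real.sqrt (∑ i, (A.mulVec x i) ^ 2)}

/-!
Expanding the square, `‖L - M O‖_F² = ‖L‖_F² + ‖M‖_F² - 2 tr(Lᵀ M O)`, so the optimizers are the
maximizers of `O ↦ tr(Lᵀ M O)` over `𝐎`, and since `O` is block diagonal the diagonal block `P_t` of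
an optimizer maximizes `R ↦ tr(B_t R)` over the orthogonal group, where `B_t = (Lᵀ M)_{t,t}`.
Testing maximality against Householder reflections and products of two of them shows that
`B_t P_t` is symmetric positive semidefinite. The eigenvalue bound makes `B_t` invertible: a kernel
vector of `B_t` would produce a vector on which the optimal residual `L - M P` is longer than
`d_ABW(L, M)` allows. Then `B_t P_t` is positive definite, and for a positive definite `S` the
trace `tr(S R)` over orthogonal `R` is maximal only at `R = 1`; hence `P_t` is unique.
-/

section Frobenius

variable {m n : Type*} [Fintype m] [Fintype n]

lemma frobNorm_nonneg (A : Matrix m n ℝ) : 0 ≤ frobNorm A :=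
  Real.sqrt_nonneg _

lemma frobNorm_sq (A : Matrix m n ℝ) : frobNorm A ^ 2 = ∑ i, ∑ j, A i j ^ 2 :=
  Real.sq_sqrt (by positivity)

lemma frobNorm_sq_eq_trace (A : Matrix m n ℝ) : frobNorm A ^ 2 = (Aᵀ * A).trace := by
  rw [frobNorm_sq, trace, Finset.sum_comm]
  simp [mul_apply, sq]

lemma frobNorm_sub_mul_sq [DecidableEq n] (L M : Matrix m n ℝ) {O : Matrix n n ℝ}
    (hO : Oᵀ * O = 1) :
    frobNorm (L - M * O) ^ 2 = frobNorm L ^ 2 + frobNorm M ^ 2 - 2 * (Lᵀ * M * O).trace := by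
  have h1 : (Oᵀ * (Mᵀ * L)).trace = (Lᵀ * (M * O)).trace := by
    rw [← trace_transpose]
    simp [Matrix.mul_assoc]
  have h2 : (Oᵀ * (Mᵀ * (M * O))).trace = (Mᵀ * M).trace := by
    rw [trace_mul_comm, Matrix.mul_assoc, Matrix.mul_assoc, mul_eq_one_comm.1 hO, Matrix.mul_one]
  simp only [frobNorm_sq_eq_trace, transpose_sub, transpose_mul, Matrix.sub_mul, Matrix.mul_sub,
    trace_sub, Matrix.mul_assoc, h1, h2]
  ring

lemma mulVec_dotProduct_mulVec {l : Type*} [Fintype l] (A : Matrix l m ℝ) (C : Matrix l n ℝ)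
    (x : m → ℝ) (y : n → ℝ) : (A *ᵥ x) ⬝ᵥ (C *ᵥ y) = x ⬝ᵥ (Aᵀ * C) *ᵥ y := by
  rw [← mulVec_mulVec, dotProduct_mulVec x Aᵀ, vecMul_transpose]

lemma dotProduct_mulVec_self_le (A : Matrix m n ℝ) (x : n → ℝ) :
    (A *ᵥ x) ⬝ᵥ (A *ᵥ x) ≤ frobNorm A ^ 2 * (x ⬝ᵥ x) := by
  rw [frobNorm_sq, Finset.sum_mul]
  refine Finset.sum_le_sum fun i _ => ?_
  simpa only [mulVec, dotProduct, ← sq] using Finset.sum_mul_sq_le_sq_mul_sq _ (A i) x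

end Frobenius

lemma eq_zero_of_forall_mul_le_sq_mul {a β : ℝ} (h : ∀ t : ℝ, t * β ≤ t ^ 2 * a) : β = 0 := by
  have hk : 0 < |a| + 1 := by positivity
  have h1 := h (β / (|a| + 1))
  rw [div_pow, div_mul_eq_mul_div, div_mul_eq_mul_div, div_le_div_iff₀ hk (by positivity)] at h1
  have h2 : β ^ 2 * (|a| + 1) ≤ β ^ 2 * a := le_of_mul_le_mul_right (by nlinarith) hk
  nlinarith [le_abs_self a, sq_nonneg β]

namespace Matrix

variable {n : Type*} [Fintype n]

lemma trace_mul_vecMulVec (S : Matrix n n ℝ) (u w : n → ℝ) :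
    (S * vecMulVec u w).trace = (S *ᵥ u) ⬝ᵥ w := by
  rw [mul_vecMulVec, trace_vecMulVec]

variable [DecidableEq n]

noncomputable def householder (v : n → ℝ) : Matrix n n ℝ :=
  1 - (2 / (v ⬝ᵥ v)) • vecMulVec v v

lemma transpose_householder (v : n → ℝ) : (householder v)ᵀ = householder v := by
  simp [householder, transpose_sub]

-- Since `2 / 0 = 0`, `householder 0 = 1`.
lemma transpose_householder_mul_self (v : n → ℝ) :
    (householder v)ᵀ * householder v = 1 := by
  have hsq : (2 / (v ⬝ᵥ v)) ^ 2 * (v ⬝ᵥ v) = 2 * (2 / (v ⬝ᵥ v)) := by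
    rcases eq_or_ne (v ⬝ᵥ v) 0 with h | h
    · simp [h]
    · field_simp
  rw [transpose_householder, householder, sub_mul, mul_sub, mul_sub, Matrix.one_mul,
    Matrix.mul_one, Matrix.one_mul, smul_mul_smul, vecMulVec_mul_vecMulVec, vecMulVec_smul,
    smul_smul, ← sq, hsq]
  module

lemma trace_mul_householder (S : Matrix n n ℝ) (v : n → ℝ) :
    (S * householder v).trace = S.trace - 2 / (v ⬝ᵥ v) * ((S *ᵥ v) ⬝ᵥ v) := by
  rw [householder, mul_sub, Matrix.mul_one, Matrix.mul_smul, trace_sub, trace_smul,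
    trace_mul_vecMulVec, smul_eq_mul]

lemma trace_mul_householder_mul_householder (S : Matrix n n ℝ) (u w : n → ℝ) :
    (S * householder u * householder w).trace = S.trace - 2 / (u ⬝ᵥ u) * ((S *ᵥ u) ⬝ᵥ u)
      - 2 / (w ⬝ᵥ w) * ((S *ᵥ w) ⬝ᵥ w)
      + 2 / (u ⬝ᵥ u) * (2 / (w ⬝ᵥ w)) * (u ⬝ᵥ w) * ((S *ᵥ u) ⬝ᵥ w) := by
  simp only [householder, Matrix.mul_sub, Matrix.sub_mul, Matrix.mul_one, Matrix.mul_smul,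
    Matrix.smul_mul, Matrix.mul_assoc, vecMulVec_mul_vecMulVec, vecMulVec_smul, trace_sub,
    trace_smul, trace_mul_vecMulVec, smul_eq_mul]
  ring

variable {S : Matrix n n ℝ}

lemma isSymm_of_forall_trace_mul_le
    (hS : ∀ R : Matrix n n ℝ, Rᵀ * R = 1 → (S * R).trace ≤ S.trace) : S.IsSymm := by
  refine IsSymm.ext fun i j => ?_
  rcases eq_or_ne i j with rfl | hij
  · rfl
  refine sub_eq_zero.1 (eq_zero_of_forall_mul_le_sq_mul (a := S i i + S j j) fun t => ?_)
  -- The reflections in `u` and `w` compose to a rotation of the `(i, j)`-plane.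
  set u : n → ℝ := Pi.single i 1
  set w : n → ℝ := Pi.single i 1 + t • Pi.single j 1
  have h := hS (householder u * householder w) (by
    rw [transpose_mul, Matrix.mul_assoc, ← Matrix.mul_assoc (householder u)ᵀ,
      transpose_householder_mul_self, Matrix.one_mul, transpose_householder_mul_self])
  rw [← Matrix.mul_assoc, trace_mul_householder_mul_householder] at h
  simp only [u, w, mulVec_add, mulVec_smul, mulVec_single_one, dotProduct_add, dotProduct_smul,
    dotProduct_single_one, Pi.single_eq_same, div_one, col_apply, Pi.add_apply, Pi.smul_apply,
    Pi.single_eq_of_ne hij, Pi.single_eq_of_ne (Ne.symm hij), smul_eq_mul, mul_zero, add_zero,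
    mul_one, zero_add] at h
  rw [← sub_nonneg] at h
  field_simp at h
  nlinarith

lemma posSemidef_of_forall_trace_mul_le
    (hS : ∀ R : Matrix n n ℝ, Rᵀ * R = 1 → (S * R).trace ≤ S.trace) : S.PosSemidef := by
  refine .of_dotProduct_mulVec_nonneg
    (isHermitian_iff_isSymm.2 (isSymm_of_forall_trace_mul_le hS)) fun v => ?_
  rcases eq_or_ne v 0 with rfl | hv
  · simp
  have h := hS _ (transpose_householder_mul_self v)
  rw [trace_mul_householder, sub_le_self_iff] at h
  have hv : 0 < v ⬝ᵥ v := by simpa using (dotProduct_self_star_pos_iff (v := v)).2 hv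
  simpa [dotProduct_comm] using nonneg_of_mul_nonneg_right h (by positivity)

lemma PosDef.eq_one_of_trace_mul_eq (hS : S.PosDef) {R : Matrix n n ℝ} (hR : Rᵀ * R = 1)
    (htr : (S * R).trace = S.trace) : R = 1 := by
  have hzero : (1 - R)ᴴ * S * (1 - R) = 0 := by
    refine (hS.posSemidef.conjTranspose_mul_mul_same _).trace_eq_zero_iff.1 ?_
    have h1 : (Rᵀ * S).trace = (S * R).trace := by
      rw [← trace_transpose, transpose_mul, transpose_transpose,
        isHermitian_iff_isSymm.1 hS.isHermitian]
    have h2 : (Rᵀ * S * R).trace = S.trace := by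
      rw [trace_mul_cycle, mul_eq_one_comm.1 hR, Matrix.one_mul]
    simp only [conjTranspose_eq_transpose_of_trivial, transpose_sub, transpose_one,
      Matrix.sub_mul, Matrix.mul_sub, Matrix.one_mul, Matrix.mul_one, trace_sub, h1, h2, htr]
    ring
  rw [eq_comm, ← sub_eq_zero]
  refine (ext_iff_mulVec ..).2 fun x => ?_
  rw [zero_mulVec]
  by_contra hx
  have h := hS.dotProduct_mulVec_pos hx
  rw [star_mulVec, ← dotProduct_mulVec, mulVec_mulVec, mulVec_mulVec, hzero] at h
  simp at h

lemma eq_of_forall_trace_mul_le {B P Q : Matrix n n ℝ} (hB : IsUnit B)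
    (hP : Pᵀ * P = 1) (hQ : Qᵀ * Q = 1)
    (hPmax : ∀ O : Matrix n n ℝ, Oᵀ * O = 1 → (B * O).trace ≤ (B * P).trace)
    (hQmax : ∀ O : Matrix n n ℝ, Oᵀ * O = 1 → (B * O).trace ≤ (B * Q).trace) : P = Q := by
  have hQ' : Q * Qᵀ = 1 := mul_eq_one_comm.1 hQ
  have hmax : ∀ R : Matrix n n ℝ, Rᵀ * R = 1 → (B * Q * R).trace ≤ (B * Q).trace := by
    intro R hR
    refine Matrix.mul_assoc B Q R ▸ hQmax _ ?_
    rw [transpose_mul, Matrix.mul_assoc, ← Matrix.mul_assoc Qᵀ, hQ, Matrix.one_mul, hR]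
  have hpos : (B * Q).PosDef := (posSemidef_of_forall_trace_mul_le hmax).posDef_iff_isUnit.2
    (hB.mul ((isUnit_iff_isUnit_det Q).2 (isUnit_det_of_left_inverse hQ)))
  have hR : (Qᵀ * P)ᵀ * (Qᵀ * P) = 1 := by
    rw [transpose_mul, transpose_transpose, Matrix.mul_assoc, ← Matrix.mul_assoc Q, hQ',
      Matrix.one_mul, hP]
  have hBQR : B * Q * (Qᵀ * P) = B * P := by
    rw [Matrix.mul_assoc, ← Matrix.mul_assoc Q, hQ', Matrix.one_mul]
  have h1 := hpos.eq_one_of_trace_mul_eq hR (le_antisymm (hmax _ hR) (hBQR ▸ hPmax Q hQ))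
  calc P = Q * (Qᵀ * P) := by rw [← Matrix.mul_assoc, hQ', Matrix.one_mul]
    _ = Q := by rw [h1, Matrix.mul_one]

lemma IsHermitian.posDef_sub_smul_one {c : ℝ} (hS : S.IsHermitian)
    (hc : ∀ μ : ℝ, (∃ x : n → ℝ, x ≠ 0 ∧ S *ᵥ x = μ • x) → c < μ) : (S - c • 1).PosDef := by
  have hSc : (S - c • 1).IsHermitian := hS.sub (isHermitian_one.smul (IsSelfAdjoint.all c))
  refine hSc.posDef_iff_eigenvalues_pos.2 fun i => ?_
  have hv : ⇑(hSc.eigenvectorBasis i) ≠ 0 := fun h =>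
    hSc.eigenvectorBasis.orthonormal.ne_zero i (by ext k; exact congrFun h k)
  have hSv := hSc.mulVec_eigenvectorBasis i
  rw [sub_mulVec, smul_mulVec, one_mulVec, sub_eq_iff_eq_add, ← add_smul] at hSv
  linarith [hc _ ⟨_, hv, hSv⟩]

end Matrix

def bdiag {d T : ℕ} (F : Fin T → Matrix (Fin d) (Fin d) ℝ) : Mat d T :=
  of fun p q => if p.1 = q.1 then F p.1 p.2 q.2 else 0

section Blocks

variable {d T : ℕ}

@[simp] lemma bdiag_apply (F : Fin T → Matrix (Fin d) (Fin d) ℝ) (p q : Fin T × Fin d) :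
    bdiag F p q = if p.1 = q.1 then F p.1 p.2 q.2 else 0 := rfl

lemma memO.eq_bdiag {O : Mat d T} (hO : memO O) : O = bdiag (blk O) := by
  ext ⟨t, i⟩ ⟨s, j⟩
  by_cases hts : t = s
  · subst hts; simp [blk]
  · simp [hts, hO.1 t s i j hts]

lemma trace_mul_bdiag (A : Mat d T) (F : Fin T → Matrix (Fin d) (Fin d) ℝ) :
    (A * bdiag F).trace = ∑ t, (blk A t * F t).trace := by
  simp [trace, mul_apply, Fintype.sum_prod_type, blk]

lemma memO_bdiag {F : Fin T → Matrix (Fin d) (Fin d) ℝ} (hF : ∀ t, (F t)ᵀ * F t = 1) :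
    memO (bdiag F) := by
  refine ⟨fun t s i j hts => by simp [hts], ?_⟩
  ext ⟨t, i⟩ ⟨s, j⟩
  by_cases hts : t = s
  · subst hts
    simpa [mul_apply, Fintype.sum_prod_type, one_apply] using congrFun (congrFun (hF t) i) j
  · simp [mul_apply, Fintype.sum_prod_type, one_apply, hts, Ne.symm hts]

lemma memO.transpose_blk_mul_blk {O : Mat d T} (hO : memO O) (t : Fin T) :
    (blk O t)ᵀ * blk O t = 1 := by
  have h := hO.2
  rw [hO.eq_bdiag] at h
  ext i j
  simpa [mul_apply, Fintype.sum_prod_type, one_apply] using congrFun (congrFun h (t, i)) (t, j)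

lemma colBlk_mul_of_memO (X : Mat d T) {O : Mat d T} (hO : memO O) (t : Fin T) :
    colBlk (X * O) t = colBlk X t * blk O t := by
  rw [hO.eq_bdiag]
  ext p j
  simp [colBlk, mul_apply, Fintype.sum_prod_type, blk]

lemma transpose_colBlk_mul_colBlk (X Y : Mat d T) (t : Fin T) :
    (colBlk X t)ᵀ * colBlk Y t = blk (Xᵀ * Y) t :=
  rfl

lemma frobNorm_colBlk_le (A : Mat d T) (t : Fin T) : frobNorm (colBlk A t) ≤ frobNorm A := by
  refine Real.sqrt_le_sqrt (Finset.sum_le_sum fun p _ => ?_)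
  rw [Fintype.sum_prod_type]
  exact Finset.single_le_sum (f := fun s => ∑ j, A p (s, j) ^ 2)
    (fun _ _ => by positivity) (Finset.mem_univ t)

lemma isCompact_setOf_memO : IsCompact {O : Mat d T | memO O} := by
  have hclosed : IsClosed {O : Mat d T | memO O} := by
    simp only [memO, Set.ofPred_and, Set.ofPred_forall]
    refine .inter (isClosed_iInter fun t => isClosed_iInter fun s => isClosed_iInter fun i =>
      isClosed_iInter fun j => isClosed_iInter fun _ => isClosed_eq (by fun_prop) (by fun_prop))
      (isClosed_eq (by fun_prop) (by fun_prop))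
  refine (isCompact_univ_pi fun _ => isCompact_univ_pi fun _ =>
    isCompact_closedBall (0 : ℝ) 1).of_isClosed_subset hclosed fun (O : Mat d T) hO p _ q _ => ?_
  have hU : O ∈ unitaryGroup (Fin T × Fin d) ℝ := by
    rw [mem_unitaryGroup_iff', star_eq_conjTranspose, conjTranspose_eq_transpose_of_trivial]
    exact hO.2
  simpa using entry_norm_bound_of_unitary hU p q

lemma dABW_le (L M : Mat d T) {O : Mat d T} (hO : memO O) : dABW L M ≤ frobNorm (L - M * O) :=
  csInf_le ⟨0, fun _ ⟨_, _, hr⟩ => hr ▸ Real.sqrt_nonneg _⟩ ⟨O, hO, rfl⟩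

lemma OStar_nonempty (L M : Mat d T) : (OStar L M).Nonempty := by
  obtain ⟨O, hO, hmin⟩ := isCompact_setOf_memO.exists_isMinOn
    ⟨bdiag fun _ => 1, memO_bdiag fun _ => by simp⟩
    (f := fun O => frobNorm (L - M * O)) (by unfold frobNorm; fun_prop)
  refine ⟨O, hO, le_antisymm ?_ (dABW_le L M hO)⟩
  exact le_csInf ⟨_, O, hO, rfl⟩ fun _ ⟨O', hO', hr⟩ => hr ▸ hmin hO'

variable {L M P : Mat d T}

lemma trace_mul_le_of_mem_OStar (hP : P ∈ OStar L M) {O : Mat d T} (hO : memO O) :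
    (Lᵀ * M * O).trace ≤ (Lᵀ * M * P).trace := by
  have h1 : frobNorm (L - M * P) ≤ frobNorm (L - M * O) := hP.2 ▸ dABW_le L M hO
  have h := pow_le_pow_left₀ (frobNorm_nonneg _) h1 2
  rw [frobNorm_sub_mul_sq L M hP.1.2, frobNorm_sub_mul_sq L M hO.2] at h
  linarith

lemma trace_blk_mul_le_of_mem_OStar (hP : P ∈ OStar L M) (t : Fin T)
    {R : Matrix (Fin d) (Fin d) ℝ} (hR : Rᵀ * R = 1) :
    (blk (Lᵀ * M) t * R).trace ≤ (blk (Lᵀ * M) t * blk P t).trace := by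
  have hG : memO (bdiag (Function.update (blk P) t R)) := memO_bdiag fun s => by
    rcases eq_or_ne s t with rfl | hs
    · simpa using hR
    · simpa [hs] using hP.1.transpose_blk_mul_blk s
  have h := trace_mul_le_of_mem_OStar hP hG
  rw [congrArg (Lᵀ * M * ·) hP.1.eq_bdiag, trace_mul_bdiag, trace_mul_bdiag] at h
  simp_rw [Function.apply_update (fun s X => (blk (Lᵀ * M) s * X).trace)] at h
  rw [Finset.sum_update_of_mem (Finset.mem_univ t), Finset.sum_eq_add_sum_sdiff_singleton
    (s := Finset.univ) t (fun s => (blk (Lᵀ * M) s * blk P s).trace) (by simp)] at h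
  linarith

-- A kernel vector `z` of `(Lᵀ M)_{t,t}` gives `x = P_tᵀ z` with
-- `‖(L - M P) x‖² ≥ xᵀ (Lᵀ L)_{t,t} x > d_ABW² ‖x‖²`, while `‖L - M P‖_F = d_ABW`.
lemma isUnit_blk_transpose_mul_of_mem_OStar (hP : P ∈ OStar L M) (t : Fin T)
    (hsmall : ∀ μ : ℝ, (∃ x : Fin d → ℝ, x ≠ 0 ∧ (blk (Lᵀ * L) t).mulVec x = μ • x) →
      dABW L M ^ 2 < μ) :
    IsUnit (blk (Lᵀ * M) t) := by
  rw [isUnit_iff_isUnit_det, isUnit_iff_ne_zero]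
  intro hdet
  obtain ⟨z, hz, hBz⟩ := exists_mulVec_eq_zero_iff.2 hdet
  set x := (blk P t)ᵀ *ᵥ z
  have hxz : blk P t *ᵥ x = z := by
    rw [mulVec_mulVec, mul_eq_one_comm.1 (hP.1.transpose_blk_mul_blk t), one_mulVec]
  have hx : x ≠ 0 := fun h => hz (by rw [← hxz, h, mulVec_zero])
  set u := colBlk L t *ᵥ x
  set w := colBlk M t *ᵥ z
  have huw : u ⬝ᵥ w = 0 := by
    rw [mulVec_dotProduct_mulVec, transpose_colBlk_mul_colBlk, hBz, dotProduct_zero]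
  have hu : u ⬝ᵥ u = x ⬝ᵥ blk (Lᵀ * L) t *ᵥ x := by
    rw [mulVec_dotProduct_mulVec, transpose_colBlk_mul_colBlk]
  set A := L - M * P
  have hAx : colBlk A t *ᵥ x = u - w := by
    rw [show colBlk A t = colBlk L t - colBlk (M * P) t from rfl, colBlk_mul_of_memO M hP.1,
      sub_mulVec, ← mulVec_mulVec, hxz]
  have hlower : x ⬝ᵥ blk (Lᵀ * L) t *ᵥ x ≤ (colBlk A t *ᵥ x) ⬝ᵥ (colBlk A t *ᵥ x) := by
    rw [hAx, ← hu]
    simp only [sub_dotProduct, dotProduct_sub, dotProduct_comm w u, huw]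
    linarith [show 0 ≤ w ⬝ᵥ w by simpa using dotProduct_star_self_nonneg w]
  have hupper : (colBlk A t *ᵥ x) ⬝ᵥ (colBlk A t *ᵥ x) ≤ dABW L M ^ 2 * (x ⬝ᵥ x) := by
    refine (dotProduct_mulVec_self_le _ x).trans ?_
    rw [← hP.2]
    exact mul_le_mul_of_nonneg_right (pow_le_pow_left₀ (frobNorm_nonneg _)
      (frobNorm_colBlk_le A t) 2) (by simpa using dotProduct_star_self_nonneg x)
  have hherm : (blk (Lᵀ * L) t).IsHermitian := isHermitian_conjTranspose_mul_self (colBlk L t)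
  have hpos := (hherm.posDef_sub_smul_one hsmall).dotProduct_mulVec_pos hx
  simp only [star_trivial, sub_mulVec, smul_mulVec, one_mulVec, dotProduct_sub, dotProduct_smul,
    smul_eq_mul, sub_pos] at hpos
  linarith

end Blocks

lemma OStar_subsingleton {d T : ℕ} {L M : Mat d T}
    (hsmall : ∀ t : Fin T, ∀ μ : ℝ,
      (∃ x : Fin d → ℝ, x ≠ 0 ∧ (blk (Lᵀ * L) t).mulVec x = μ • x) → dABW L M ^ 2 < μ) :
    (OStar L M).Subsingleton := by
  intro P hP Q hQ
  rw [hP.1.eq_bdiag, hQ.1.eq_bdiag]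
  congr 1
  funext t
  exact eq_of_forall_trace_mul_le (isUnit_blk_transpose_mul_of_mem_OStar hP t (hsmall t))
    (hP.1.transpose_blk_mul_blk t) (hQ.1.transpose_blk_mul_blk t)
    (fun _ => trace_blk_mul_le_of_mem_OStar hP t) (fun _ => trace_blk_mul_le_of_mem_OStar hQ t)

theorem stmt19_general (d T : ℕ) (L M : Mat d T)
    (hsmall : ∀ t : Fin T, ∀ μ : ℝ,
      (∃ x : Fin d → ℝ, x ≠ 0 ∧ (blk (Lᵀ * L) t).mulVec x = μ • x) →
      dABW L M ^ 2 < μ) :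
    ∃ P : Mat d T, OStar L M = {P} := by
  obtain ⟨P, hP⟩ := OStar_nonempty L M
  exact ⟨P, (OStar_subsingleton hsmall).eq_singleton_of_mem hP⟩

/-- if `L ∈ 𝐋^reg` and `d_ABW(L,M)² < min_t λ_min((LᵀL)_{t,t})` (expressed as:
`d_ABW(L,M)²` is smaller than every eigenvalue of every diagonal block `(LᵀL)_{t,t}`), then
`𝐎*(L,M)` is a singleton. -/
theorem stmt19 (d T : ℕ) (hd : 0 < d) (hT : 0 < T) (L M : Mat d T)
    (hL : L ∈ LReg) (hM : memL M)
    (hsmall : ∀ t : Fin T, ∀ μ : ℝ,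
      (∃ x : Fin d → ℝ, x ≠ 0 ∧ (blk (Lᵀ * L) t).mulVec x = μ • x) →
      dABW L M ^ 2 < μ) :
    ∃ P : Mat d T, OStar L M = {P} :=
  stmt19_general d T L M hsmall
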